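/- arXiv:0903.3026 — 2 statements merged into one kernel-verified Lean document; each statement's English description precedes it below -/
import Mathlib

section
/- Every nonnegative integer n can be written as T_x + 2T_y + 4T_z for nonnegative integers x, y, z. -/
/-- The `n`-th triangular number. -/
def T (n : ℕ) : ℕ := n * (n + 1) / 2

/-!
Since an odd square is `8 T x + 1`, the claim is that `8 n + 7 = A² + 2 B² + 4 C²` with `A, B, C`
odd, and by a parity argument modulo 8 it suffices to write `m = 8 n + 7` as `α² + β² + 2 γ²`.
Dirichlet's theorem gives a prime `p ≡ 5 (mod 8)` with `m ∣ 2 p + 1`; quadratic reciprocity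
makes `-2 m` a square modulo `p`, and from a square root one builds a positive definite integral
ternary form of determinant 2 with leading coefficient `m`. Hermite–Gauss reduction shows that
every such form is equivalent to `x² + y² + 2 z²`, so `m` is a value of the latter.
-/

def binQF (A B C y z : ℤ) : ℤ := A * y ^ 2 + 2 * B * y * z + C * z ^ 2

theorem exists_four_mul_sq_add_mul_le (B : ℤ) {A : ℤ} (hA : 0 < A) :
    ∃ k : ℤ, 4 * (B + k * A) ^ 2 ≤ A ^ 2 := by
  have h₀ := Int.emod_nonneg B hA.ne'
  have h₁ := Int.emod_lt_of_pos B hA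
  have hdiv := Int.emod_def B A
  by_cases h : 2 * (B % A) ≤ A
  · exact ⟨-(B / A), by nlinarith⟩
  · exact ⟨-(B / A) - 1, by nlinarith⟩

-- Gauss reduction: shift `B` into `[-A/2, A/2]`; if `A` still exceeds the new `C`, swap the
-- variables and recurse on the smaller leading coefficient. A reduced form has
-- `3 a² ≤ 4 (A C - B²)`.
theorem exists_unimodular_subst (A B C : ℤ) (hA : 0 < A) (hD : 0 < A * C - B ^ 2) :
    ∃ a b c p q r s : ℤ, 0 < a ∧ 3 * a ^ 2 ≤ 4 * (A * C - B ^ 2) ∧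
      a * c - b ^ 2 = A * C - B ^ 2 ∧ (p * s - q * r) ^ 2 = 1 ∧
      ∀ y z, binQF A B C (p * y + q * z) (r * y + s * z) = binQF a b c y z := by
  obtain ⟨k, hk⟩ := exists_four_mul_sq_add_mul_le B hA
  set B' := B + k * A
  set C' := C + 2 * k * B + k ^ 2 * A
  have hdet : A * C' - B' ^ 2 = A * C - B ^ 2 := by ring
  have hshift : ∀ y z, binQF A B C (y + k * z) z = binQF A B' C' y z := by
    intro y z; simp only [binQF, B', C']; ring
  have hC' : 0 < C' := by nlinarith
  by_cases hAC : A ≤ C'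
  · exact ⟨A, B', C', 1, k, 0, 1, hA, by nlinarith, hdet, by ring,
      fun y z => by simpa using hshift y z⟩
  · obtain ⟨a, b, c, p, q, r, s, ha, hbound, hdet', hps, hsubst⟩ :=
      exists_unimodular_subst C' B' A hC' (by linarith)
    refine ⟨a, b, c, r + k * p, s + k * q, p, q, ha, by linarith, by linarith,
      by linear_combination hps, fun y z => ?_⟩
    rw [← hsubst]
    simp only [binQF, B', C']; ring
termination_by A.toNat
decreasing_by omega

theorem exists_binQF_eq_sq_add_two_mul_sq {A B C : ℤ} (hA : 0 < A) (hD : A * C - B ^ 2 = 2) :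
    ∃ u v u' v' : ℤ, ∀ y z, binQF A B C y z = (u * y + v * z) ^ 2 + 2 * (u' * y + v' * z) ^ 2 := by
  obtain ⟨a, b, c, p, q, r, s, ha, hbound, hdet, hps, hsubst⟩ :=
    exists_unimodular_subst A B C hA (by omega)
  have ha1 : a = 1 := by nlinarith
  subst ha1
  refine ⟨s - b * r, b * p - q, -r, p, fun y z => ?_⟩
  have := hsubst (s * y - q * z) (p * z - r * y)
  simp only [binQF] at this ⊢
  linear_combination this - (A * y ^ 2 + 2 * B * y * z + C * z ^ 2) * hps
    + (p * z - r * y) ^ 2 * (hdet + hD)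

open Matrix

def qf {n R : Type*} [Fintype n] [CommRing R] (G : Matrix n n R) (v : n → R) : R :=
  v ⬝ᵥ G *ᵥ v

section QuadraticForm

variable {n R : Type*} [Fintype n] [CommRing R]

theorem qf_transpose_mul_mul (G U : Matrix n n R) (v : n → R) :
    qf (Uᵀ * G * U) v = qf G (U *ᵥ v) := by
  simp only [qf, Matrix.mul_assoc, ← mulVec_mulVec, dotProduct_mulVec, vecMul_transpose]

theorem qf_single [DecidableEq n] (G : Matrix n n R) (i : n) : qf G (Pi.single i 1) = G i i := by
  simp [qf]

theorem Matrix.isSymm_transpose_mul_mul {G : Matrix n n R} (hG : G.IsSymm) (U : Matrix n n R) :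
    (Uᵀ * G * U).IsSymm := by
  simp only [IsSymm, transpose_mul, transpose_transpose, hG.eq, Matrix.mul_assoc]

end QuadraticForm

theorem qf_fin_three {G : Matrix (Fin 3) (Fin 3) ℤ} (hG : G.IsSymm) (x y z : ℤ) :
    qf G ![x, y, z] = G 0 0 * x ^ 2 + G 1 1 * y ^ 2 + G 2 2 * z ^ 2
      + 2 * G 0 1 * x * y + 2 * G 0 2 * x * z + 2 * G 1 2 * y * z := by
  simp [qf, mulVec, dotProduct, Fin.sum_univ_three, hG.apply 0 1, hG.apply 0 2, hG.apply 1 2]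
  ring

structure IsPosDefDetTwo (G : Matrix (Fin 3) (Fin 3) ℤ) : Prop where
  isSymm : G.IsSymm
  det_eq : G.det = 2
  qf_pos : ∀ v, v ≠ 0 → 0 < qf G v

namespace IsPosDefDetTwo

variable {G : Matrix (Fin 3) (Fin 3) ℤ}

theorem apply_zero_zero_pos (hG : IsPosDefDetTwo G) : 0 < G 0 0 := by
  simpa [qf_single] using hG.qf_pos (Pi.single 0 1) (by simp)

theorem transpose_mul_mul (hG : IsPosDefDetTwo G) {U : Matrix (Fin 3) (Fin 3) ℤ}
    (hU : IsUnit U.det) : IsPosDefDetTwo (Uᵀ * G * U) where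
  isSymm := isSymm_transpose_mul_mul hG.isSymm U
  det_eq := by rw [det_mul, det_mul, det_transpose, hG.det_eq, mul_right_comm, ← sq,
    Int.isUnit_sq hU, one_mul]
  qf_pos v hv := by
    rw [qf_transpose_mul_mul]
    exact hG.qf_pos _ fun h => hv <| mulVec_injective_of_isUnit
      ((isUnit_iff_isUnit_det U).mpr hU) (h.trans (mulVec_zero U).symm)

theorem exists_complement (hG : IsPosDefDetTwo G) :
    ∃ D E F : ℤ, 0 < D ∧ D * F - E ^ 2 = 2 * G 0 0 ∧ ∀ x y z,
      G 0 0 * qf G ![x, y, z] = (G 0 0 * x + G 0 1 * y + G 0 2 * z) ^ 2 + binQF D E F y z := by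
  have hsq : ∀ x y z, G 0 0 * qf G ![x, y, z] = (G 0 0 * x + G 0 1 * y + G 0 2 * z) ^ 2 +
      binQF (G 0 0 * G 1 1 - G 0 1 ^ 2) (G 0 0 * G 1 2 - G 0 1 * G 0 2)
        (G 0 0 * G 2 2 - G 0 2 ^ 2) y z := by
    intro x y z
    rw [qf_fin_three hG.isSymm, binQF]
    ring
  refine ⟨_, _, _, ?_, ?_, hsq⟩
  · have hpos := hG.qf_pos ![-G 0 1, G 0 0, 0] (by simp [hG.apply_zero_zero_pos.ne'])
    have hval := hsq (-G 0 1) (G 0 0) 0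
    simp only [binQF] at hval
    have := hG.apply_zero_zero_pos
    nlinarith
  · have hdet := hG.det_eq
    rw [det_fin_three, hG.isSymm.apply 0 1, hG.isSymm.apply 0 2, hG.isSymm.apply 1 2] at hdet
    linear_combination G 0 0 * hdet

-- Hermite's argument: the first column `(k, p, r)` of `U` has a value `Q` with
-- `G₀₀ Q = (G₀₀ k + G₀₁ p + G₀₂ r)² + a`, where the square is at most `G₀₀² / 4` by the choice
-- of `k`, and `3 a² ≤ 8 G₀₀` forces `4 a < 3 G₀₀²`.
theorem exists_transpose_mul_mul_apply_lt (hG : IsPosDefDetTwo G) (h2 : 2 ≤ G 0 0) :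
    ∃ U : Matrix (Fin 3) (Fin 3) ℤ, IsUnit U.det ∧ (Uᵀ * G * U) 0 0 < G 0 0 := by
  obtain ⟨D, E, F, hD, hDEF, hsq⟩ := hG.exists_complement
  obtain ⟨a, b, c, p, q, r, s, ha, hbound, -, hps, hsubst⟩ :=
    exists_unimodular_subst D E F hD (by omega)
  obtain ⟨k, hk⟩ := exists_four_mul_sq_add_mul_le (G 0 1 * p + G 0 2 * r) hG.apply_zero_zero_pos
  have hpr : binQF D E F p r = a := by simpa [binQF] using hsubst 1 0
  set U : Matrix (Fin 3) (Fin 3) ℤ := !![k, 1, 0; p, 0, q; r, 0, s]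
  have hdetU : U.det = -(p * s - q * r) := by simp [U, det_fin_three]; ring
  have hUe : U *ᵥ Pi.single 0 1 = ![k, p, r] := by
    ext i; fin_cases i <;> simp [U]
  refine ⟨U, IsUnit.of_mul_eq_one U.det (by rw [hdetU]; linear_combination hps), ?_⟩
  rw [← qf_single (Uᵀ * G * U), qf_transpose_mul_mul, hUe]
  have hval := hsq k p r
  rw [hpr] at hval
  have h4a : 4 * a < 3 * G 0 0 ^ 2 := by
    rw [hDEF] at hbound
    by_contra! h
    have h2a : 3 * G 0 0 ≤ 2 * a := by nlinarith
    nlinarith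
  nlinarith

theorem exists_qf_eq_of_apply_zero_zero_eq_one (hG : IsPosDefDetTwo G) (h1 : G 0 0 = 1)
    (v : Fin 3 → ℤ) : ∃ x y z : ℤ, qf G v = x ^ 2 + y ^ 2 + 2 * z ^ 2 := by
  obtain ⟨D, E, F, hD, hDEF, hsq⟩ := hG.exists_complement
  rw [h1, mul_one] at hDEF
  obtain ⟨u, w, u', w', hbin⟩ := exists_binQF_eq_sq_add_two_mul_sq hD hDEF
  have hv : ![v 0, v 1, v 2] = v := by ext i; fin_cases i <;> rfl
  have hval := hsq (v 0) (v 1) (v 2)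
  rw [hv, hbin, h1, one_mul] at hval
  exact ⟨v 0 + G 0 1 * v 1 + G 0 2 * v 2, u * v 1 + w * v 2, u' * v 1 + w' * v 2,
    by rw [hval]; ring⟩

theorem exists_qf_eq {G : Matrix (Fin 3) (Fin 3) ℤ} (hG : IsPosDefDetTwo G) (v : Fin 3 → ℤ) :
    ∃ x y z : ℤ, qf G v = x ^ 2 + y ^ 2 + 2 * z ^ 2 := by
  by_cases h1 : G 0 0 = 1
  · exact hG.exists_qf_eq_of_apply_zero_zero_eq_one h1 v
  have h2 : 2 ≤ G 0 0 := by have := hG.apply_zero_zero_pos; omega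
  obtain ⟨U, hU, hlt⟩ := hG.exists_transpose_mul_mul_apply_lt h2
  obtain ⟨x, y, z, h⟩ := (hG.transpose_mul_mul hU).exists_qf_eq (U⁻¹ *ᵥ v)
  refine ⟨x, y, z, ?_⟩
  rwa [qf_transpose_mul_mul, mulVec_mulVec, mul_nonsing_inv U hU, one_mulVec] at h
termination_by (G 0 0).toNat
decreasing_by have := (hG.transpose_mul_mul hU).apply_zero_zero_pos; omega

end IsPosDefDetTwo

theorem isPosDefDetTwo_of {m p β γ a c : ℤ} (hm : 0 < m) (hp : 0 < p) (ha : m * a = 2 * p + 1)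
    (hγ : 2 * p * γ = β ^ 2 + 2 * m) (hc : m * c = γ + β ^ 2) :
    IsPosDefDetTwo !![m, 1, -β; 1, a, 0; -β, 0, c] := by
  set G : Matrix (Fin 3) (Fin 3) ℤ := !![m, 1, -β; 1, a, 0; -β, 0, c]
  have hsymm : G.IsSymm := IsSymm.ext fun i j => by fin_cases i <;> fin_cases j <;> rfl
  refine ⟨hsymm, ?_, fun v hv => ?_⟩
  · have hdet : G.det = m * a * c - c - a * β ^ 2 := by simp [G, det_fin_three]; ring
    refine mul_left_cancel₀ hm.ne' ?_
    rw [hdet]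
    linear_combination (m * c - β ^ 2) * ha + 2 * p * hc + hγ
  · have hv3 : ![v 0, v 1, v 2] = v := by ext i; fin_cases i <;> rfl
    have hsum : 2 * p * m * qf G v = 2 * p * (m * v 0 + v 1 - β * v 2) ^ 2
        + (2 * p * v 1 + β * v 2) ^ 2 + 2 * m * v 2 ^ 2 := by
      rw [← hv3, qf_fin_three hsymm]
      simp [G]
      linear_combination (2 * p * v 1 ^ 2) * ha + (2 * p * v 2 ^ 2) * hc + v 2 ^ 2 * hγ
    refine pos_of_mul_pos_right (hsum ▸ ?_) (by positivity : (0 : ℤ) ≤ 2 * p * m)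
    have t₁ : 0 ≤ 2 * p * (m * v 0 + v 1 - β * v 2) ^ 2 := by positivity
    have t₂ : 0 ≤ (2 * p * v 1 + β * v 2) ^ 2 := by positivity
    have t₃ : 0 ≤ 2 * m * v 2 ^ 2 := by positivity
    by_cases h2 : v 2 = 0
    · by_cases h1 : v 1 = 0
      · have h0 : v 0 ≠ 0 := fun h0 => hv (by ext i; fin_cases i <;> assumption)
        have : 0 < 2 * p * (m * v 0 + v 1 - β * v 2) ^ 2 := by rw [h1, h2]; simp; positivity
        linarith
      · have : 0 < (2 * p * v 1 + β * v 2) ^ 2 := by rw [h2]; simp; positivity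
        linarith
    · have : 0 < 2 * m * v 2 ^ 2 := by positivity
      linarith

theorem exists_prime_mod_eight_eq_five_dvd (n : ℕ) :
    ∃ p : ℕ, p.Prime ∧ p % 8 = 5 ∧ (8 * n + 7 : ℤ) ∣ 2 * p + 1 := by
  -- chosen so that `a ≡ 5 (mod 8)` and `2 a + 1 = (8 n + 7) (8 n + 13)`
  set a : ℤ := 32 * n ^ 2 + 80 * n + 45
  have hcop : IsCoprime a (8 * (8 * n + 7) : ℕ) := by
    push_cast
    exact (IsCoprime.mul_right ⟨5, -(20 * n ^ 2 + 50 * n + 28), by ring⟩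
      ⟨-2, 8 * n + 13, by ring⟩)
  obtain ⟨p, -, hp, hpa⟩ := Nat.forall_exists_prime_gt_and_zmodEq 0 (by positivity) hcop
  push_cast at hpa
  refine ⟨p, hp, ?_, ?_⟩
  · have h8 := Int.ModEq.of_mul_right _ hpa
    have ha : a % 8 = 5 := by
      rw [show a = 5 + 8 * (4 * n ^ 2 + 10 * n + 5) by ring, Int.add_mul_emod_self_left]; rfl
    unfold Int.ModEq at h8
    omega
  · obtain ⟨k, hk⟩ := (Int.ModEq.of_mul_left _ hpa).dvd
    exact ⟨-2 * k + 8 * n + 13, by linear_combination (-2) * hk⟩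

theorem legendreSym_neg_two_mul_eq_one {p m : ℕ} [Fact p.Prime] (hp : p % 8 = 5) (hm : m % 8 = 7)
    (hdvd : (m : ℤ) ∣ 2 * p + 1) : legendreSym p (-2 * m) = 1 := by
  have hm_odd : Odd m := Nat.odd_iff.mpr (by omega)
  have hp_odd : Odd p := Nat.odd_iff.mpr (by omega)
  have h2p : jacobiSym (-2) p = -1 := by
    rw [jacobiSym.at_neg_two hp_odd, ZMod.χ₈'_nat_eq_if_mod_eight]
    simp [hp, Nat.odd_iff.mp hp_odd]
  have h2m : jacobiSym (-2) m = -1 := by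
    rw [jacobiSym.at_neg_two hm_odd, ZMod.χ₈'_nat_eq_if_mod_eight]
    simp [hm, Nat.odd_iff.mp hm_odd]
  have h4 : jacobiSym (2 ^ 2) m = 1 :=
    jacobiSym.sq_one' (by
      rw [show (2 : ℤ) = (2 : ℕ) from rfl, Int.gcd_natCast_natCast]
      exact Nat.coprime_two_left.mpr hm_odd)
  have hpm : jacobiSym p m = -1 := by
    obtain ⟨k, hk⟩ := hdvd
    have hmod : (2 ^ 2 * p : ℤ) ≡ -2 [ZMOD m] :=
      Int.modEq_iff_dvd.mpr ⟨-2 * k, by linear_combination (-2) * hk⟩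
    rw [← jacobiSym.mod_left' hmod, jacobiSym.mul_left, h4, one_mul] at h2m
    exact h2m
  rw [jacobiSym.legendreSym.to_jacobiSym, jacobiSym.mul_left, h2p,
    ← jacobiSym.quadratic_reciprocity_one_mod_four (by omega) hm_odd, hpm]
  norm_num

theorem exists_two_mul_mul_eq_sq_add {p : ℕ} [Fact p.Prime] (hp2 : p ≠ 2) {a : ℤ}
    (ha : legendreSym p (-2 * a) = 1) : ∃ β γ : ℤ, 2 * p * γ = β ^ 2 + 2 * a := by
  have ha0 : ((-2 * a : ℤ) : ZMod p) ≠ 0 := fun h => by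
    rw [← legendreSym.eq_zero_iff] at h
    rw [h] at ha
    exact zero_ne_one ha
  obtain ⟨s, hs⟩ := (legendreSym.eq_one_iff p ha0).mp ha
  set t : ℤ := s.cast
  have hpt : (p : ℤ) ∣ t ^ 2 + 2 * a := by
    rw [← ZMod.intCast_zmod_eq_zero_iff_dvd]
    push_cast at hs ⊢
    rw [ZMod.intCast_zmod_cast, sq, ← hs]
    ring
  have hp_odd : Odd p := (Fact.out : p.Prime).odd_of_ne_two hp2
  have hcop := Nat.Coprime.isCoprime (Nat.coprime_two_left.mpr hp_odd)
  obtain ⟨l, hl⟩ := hp_odd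
  -- `(p + 1) t` is an even square root of `-2 a` modulo `p`
  have h2p : (2 * p : ℤ) ∣ ((p + 1) * t) ^ 2 + 2 * a := by
    refine hcop.mul_dvd ?_ ?_
    · exact ⟨2 * (l + 1) ^ 2 * t ^ 2 + a, by rw [hl]; push_cast; ring⟩
    · obtain ⟨k, hk⟩ := hpt
      exact ⟨k + (p + 2) * t ^ 2, by linear_combination hk⟩
  obtain ⟨γ, hγ⟩ := h2p
  exact ⟨(p + 1) * t, γ, hγ.symm⟩

theorem Int.sq_emod_eight_of_odd {x : ℤ} (hx : Odd x) : x ^ 2 % 8 = 1 := by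
  obtain ⟨k, rfl⟩ := hx
  obtain ⟨e, he⟩ := Int.even_mul_succ_self k
  have : (2 * k + 1) ^ 2 = 8 * e + 1 := by linear_combination 4 * he
  omega

theorem exists_odd_of_eq_sq_add_sq_add_two_mul_sq {N α β γ : ℤ} (hN : N % 8 = 7)
    (h : N = α ^ 2 + β ^ 2 + 2 * γ ^ 2) :
    ∃ A B C : ℤ, Odd A ∧ Odd B ∧ Odd C ∧ N = A ^ 2 + 2 * B ^ 2 + 4 * C ^ 2 := by
  wlog hα : Odd α generalizing α β
  · have hβ : Odd β := by
      refine Int.not_even_iff_odd.mp fun ⟨b, hb⟩ => ?_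
      obtain ⟨a, ha⟩ := Int.not_odd_iff_even.mp hα
      have : N = 2 * (2 * a ^ 2 + 2 * b ^ 2 + γ ^ 2) := by rw [h, ha, hb]; ring
      omega
    exact this (α := β) (β := α) (by rw [h]; ring) hβ
  have hα8 := Int.sq_emod_eight_of_odd hα
  obtain ⟨C, rfl⟩ : Even β := by
    refine Int.not_odd_iff_even.mp fun hβ => ?_
    have := Int.sq_emod_eight_of_odd hβ
    omega
  have hγ : Odd γ := by
    refine Int.not_even_iff_odd.mp fun ⟨g, hg⟩ => ?_
    have : N = α ^ 2 + 4 * C ^ 2 + 8 * g ^ 2 := by rw [h, hg]; ring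
    omega
  have hγ8 := Int.sq_emod_eight_of_odd hγ
  have hC : Odd C := by
    refine Int.not_even_iff_odd.mp fun ⟨c, hc⟩ => ?_
    have : N = α ^ 2 + 16 * c ^ 2 + 2 * γ ^ 2 := by rw [h, hc]; ring
    omega
  exact ⟨α, γ, C, hα, hγ, hC, by rw [h]; ring⟩

theorem exists_eq_sq_add_sq_add_two_mul_sq (n : ℕ) :
    ∃ α β γ : ℤ, (8 * n + 7 : ℤ) = α ^ 2 + β ^ 2 + 2 * γ ^ 2 := by
  obtain ⟨p, hp, hp8, hdvd⟩ := exists_prime_mod_eight_eq_five_dvd n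
  have := Fact.mk hp
  have hleg := legendreSym_neg_two_mul_eq_one (m := 8 * n + 7) hp8 (by omega)
    (by push_cast; exact hdvd)
  obtain ⟨β, γ, hγ⟩ := exists_two_mul_mul_eq_sq_add (by omega) hleg
  obtain ⟨a, ha⟩ := hdvd
  push_cast at hγ
  have hG := isPosDefDetTwo_of (c := γ * a - 2) (by positivity) (by exact_mod_cast hp.pos)
    ha.symm hγ (by linear_combination γ * ha.symm + hγ)
  obtain ⟨x, y, z, hxyz⟩ := hG.exists_qf_eq (Pi.single 0 1)
  exact ⟨x, y, z, by simpa [qf_single] using hxyz⟩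

theorem sq_two_mul_add_one_eq_eight_mul_T_add_one (x : ℕ) : (2 * x + 1) ^ 2 = 8 * T x + 1 := by
  have h : T x * 2 = x * (x + 1) := Nat.div_mul_cancel (Nat.even_mul_succ_self x).two_dvd
  nlinarith

theorem exists_sq_eq_eight_mul_T_add_one {A : ℤ} (hA : Odd A) : ∃ x : ℕ, A ^ 2 = 8 * T x + 1 := by
  obtain ⟨x, hx⟩ := Int.natAbs_odd.mpr hA
  refine ⟨x, ?_⟩
  rw [← Int.natAbs_sq, hx]
  exact_mod_cast sq_two_mul_add_one_eq_eight_mul_T_add_one x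

theorem liouville_1_2_4 (n : ℕ) : ∃ x y z : ℕ, n = T x + 2 * T y + 4 * T z := by
  obtain ⟨α, β, γ, h⟩ := exists_eq_sq_add_sq_add_two_mul_sq n
  obtain ⟨A, B, C, hA, hB, hC, hABC⟩ := exists_odd_of_eq_sq_add_sq_add_two_mul_sq (by omega) h
  obtain ⟨x, hx⟩ := exists_sq_eq_eight_mul_T_add_one hA
  obtain ⟨y, hy⟩ := exists_sq_eq_eight_mul_T_add_one hB
  obtain ⟨z, hz⟩ := exists_sq_eq_eight_mul_T_add_one hC
  refine ⟨x, y, z, ?_⟩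
  rw [hx, hy, hz] at hABC
  omega
end

section
/- Every nonnegative integer n can be written as T_x + T_y + 4T_z for nonnegative integers x, y, z. -/
theorem Int.exists_four_mul_sq_add_mul_le (w : ℤ) {m : ℤ} (hm : 0 < m) :
    ∃ t : ℤ, 4 * (w + m * t) ^ 2 ≤ m ^ 2 := by
  lift m to ℕ using hm.le
  refine ⟨-w.bdiv m, ?_⟩
  have h₁ := Int.le_bmod (x := w) (by omega : 0 < m)
  have h₂ := Int.bmod_lt (x := w) (by omega : 0 < m)
  have h₃ : w + m * -w.bdiv m = w.bmod m := by linarith [Int.bmod_add_bdiv w m]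
  rw [h₃]
  nlinarith [mul_nonneg (by omega : (0 : ℤ) ≤ m - 2 * w.bmod m)
    (by omega : (0 : ℤ) ≤ m + 2 * w.bmod m)]

namespace Matrix

variable {n R : Type*}

theorem PosDef.isSymm [Ring R] [PartialOrder R] [StarRing R] [TrivialStar R] {A : Matrix n n R}
    (hA : A.PosDef) : A.IsSymm :=
  isHermitian_iff_isSymm.mp hA.isHermitian

theorem transpose_mul_mul_apply_self [Fintype n] [CommSemiring R] (A P : Matrix n n R) (i : n) :
    (Pᵀ * A * P) i i = Pᵀ i ⬝ᵥ A *ᵥ Pᵀ i := by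
  simp only [mul_apply, dotProduct, mulVec, transpose_apply, Finset.sum_mul, Finset.mul_sum]
  rw [Finset.sum_comm]
  simp only [mul_comm, mul_left_comm]

variable [Fintype n] [DecidableEq n]

theorem PosDef.transpose_mul_mul_of_det_eq_one {A P : Matrix n n ℤ} (hA : A.PosDef)
    (hP : P.det = 1) : (Pᵀ * A * P).PosDef := by
  simpa [conjTranspose_eq_transpose_of_trivial] using
    hA.conjTranspose_mul_mul_same
      (mulVec_injective_of_isUnit (by simp [isUnit_iff_isUnit_det, hP]))

theorem det_transpose_mul_mul_of_det_eq_one [CommRing R] (A : Matrix n n R) {P : Matrix n n R}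
    (hP : P.det = 1) : (Pᵀ * A * P).det = A.det := by
  simp [hP]

theorem exists_eq_transpose_mul_self_of_transpose_mul_mul [CommRing R] {A M P : Matrix n n R}
    (hP : P.det = 1) (h : Pᵀ * A * P = Mᵀ * M) : ∃ N : Matrix n n R, A = Nᵀ * N := by
  have hPu : IsUnit P.det := by simp [hP]
  refine ⟨M * P⁻¹, ?_⟩
  rw [transpose_mul, Matrix.mul_assoc, ← Matrix.mul_assoc Mᵀ, ← h, transpose_nonsing_inv,
    mul_nonsing_inv_cancel_right _ _ hPu, nonsing_inv_mul_cancel_left _ _ (by simpa using hPu)]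

theorem PosDef.exists_det_eq_one_of_descent {d : ℤ} (good : Matrix n n ℤ → Prop) (i : n)
    (step : ∀ A : Matrix n n ℤ, A.PosDef → A.det = d → ¬ good A →
      ∃ P : Matrix n n ℤ, P.det = 1 ∧ (Pᵀ * A * P) i i < A i i)
    {A : Matrix n n ℤ} (hA : A.PosDef) (hdet : A.det = d) :
    ∃ P : Matrix n n ℤ, P.det = 1 ∧ good (Pᵀ * A * P) := by
  induction hk : (A i i).toNat using Nat.strong_induction_on generalizing A with
  | _ k ih =>
  by_cases hgood : good A
  · exact ⟨1, det_one, by simpa using hgood⟩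
  obtain ⟨P, hP, hlt⟩ := step A hA hdet hgood
  have hA' := hA.transpose_mul_mul_of_det_eq_one hP
  obtain ⟨Q, hQ, hgood'⟩ := ih _ (by have := hA'.diag_pos (i := i); omega) hA'
    (by rw [det_transpose_mul_mul_of_det_eq_one _ hP, hdet]) rfl
  exact ⟨P * Q, by simp [hP, hQ], by simpa [transpose_mul, Matrix.mul_assoc] using hgood'⟩

section Binary

variable {A : Matrix (Fin 2) (Fin 2) ℤ}

theorem IsSymm.mul_dotProduct_mulVec_fin_two (hA : A.IsSymm) (v : Fin 2 → ℤ) :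
    A 0 0 * (v ⬝ᵥ A *ᵥ v) = (A 0 0 * v 0 + A 0 1 * v 1) ^ 2 + A.det * v 1 ^ 2 := by
  have h10 : A 1 0 = A 0 1 := hA.apply 0 1
  simp [dotProduct, mulVec, Fin.sum_univ_two, det_fin_two, h10]
  ring

theorem IsSymm.posDef_fin_two (hA : A.IsSymm) (h₀ : 0 < A 0 0) (hdet : 0 < A.det) :
    A.PosDef := by
  refine .of_dotProduct_mulVec_pos (isHermitian_iff_isSymm.mpr hA) fun v hv ↦ ?_
  have hsum : 0 < (A 0 0 * v 0 + A 0 1 * v 1) ^ 2 + A.det * v 1 ^ 2 := by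
    by_cases h₁ : v 1 = 0
    · have h₀' : v 0 ≠ 0 := fun h₀' ↦ hv (by ext i; fin_cases i <;> simp [h₀', h₁])
      have := mul_ne_zero h₀.ne' h₀'
      simp [h₁]
      positivity
    · positivity
  rw [← hA.mul_dotProduct_mulVec_fin_two] at hsum
  simpa using pos_of_mul_pos_right hsum h₀.le

theorem PosDef.exists_three_mul_sq_le_det_fin_two (hA : A.PosDef) :
    ∃ P : Matrix (Fin 2) (Fin 2) ℤ, P.det = 1 ∧ 3 * (Pᵀ * A * P) 0 0 ^ 2 ≤ 4 * A.det := by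
  refine hA.exists_det_eq_one_of_descent (fun B ↦ 3 * B 0 0 ^ 2 ≤ 4 * A.det) 0
    (fun B hB hdet hbad ↦ ?_) rfl
  have h₀ : 0 < B 0 0 := hB.diag_pos
  obtain ⟨t, ht⟩ := Int.exists_four_mul_sq_add_mul_le (B 0 1) h₀
  refine ⟨!![t, -1; 1, 0], by simp [det_fin_two], ?_⟩
  have key : B 0 0 * (!![t, -1; 1, 0]ᵀ * B * !![t, -1; 1, 0]) 0 0 =
      (B 0 1 + B 0 0 * t) ^ 2 + B.det := by
    simp [mul_apply, Fin.sum_univ_two, det_fin_two, hB.isSymm.apply 0 1]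
    ring
  nlinarith

theorem PosDef.exists_eq_transpose_mul_self_fin_two (hA : A.PosDef) (hdet : A.det = 1) :
    ∃ N : Matrix (Fin 2) (Fin 2) ℤ, A = Nᵀ * N := by
  obtain ⟨P, hP, hle⟩ := hA.exists_three_mul_sq_le_det_fin_two
  set B := Pᵀ * A * P
  have hB : B.PosDef := hA.transpose_mul_mul_of_det_eq_one hP
  have hB₀ : 0 < B 0 0 := hB.diag_pos
  have hB₀₀ : B 0 0 = 1 := by nlinarith
  have hdetB : B.det = 1 := by rw [det_transpose_mul_mul_of_det_eq_one _ hP, hdet]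
  rw [det_fin_two, hB₀₀, hB.isSymm.apply 0 1] at hdetB
  have hBL : B = !![1, B 0 1; 0, 1]ᵀ * !![1, B 0 1; 0, 1] := by
    ext i j
    fin_cases i <;> fin_cases j <;>
      simp [mul_apply, Fin.sum_univ_two, hB₀₀, hB.isSymm.apply 0 1]
    linarith
  exact exists_eq_transpose_mul_self_of_transpose_mul_mul hP hBL

end Binary

section Ternary

/-- `A 0 0` times the Schur complement of the entry `A 0 0` in `A`, which is again integral. -/
def scaledSchur (A : Matrix (Fin 3) (Fin 3) ℤ) : Matrix (Fin 2) (Fin 2) ℤ :=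
  !![A 0 0 * A 1 1 - A 0 1 ^ 2, A 0 0 * A 1 2 - A 0 1 * A 0 2;
    A 0 0 * A 1 2 - A 0 1 * A 0 2, A 0 0 * A 2 2 - A 0 2 ^ 2]

variable {A : Matrix (Fin 3) (Fin 3) ℤ}

theorem isSymm_scaledSchur (A : Matrix (Fin 3) (Fin 3) ℤ) : (scaledSchur A).IsSymm :=
  IsSymm.ext fun i j ↦ by fin_cases i <;> fin_cases j <;> rfl

theorem IsSymm.det_scaledSchur (hA : A.IsSymm) : (scaledSchur A).det = A 0 0 * A.det := by
  simp [scaledSchur, det_fin_two, det_fin_three, hA.apply 0 1, hA.apply 0 2, hA.apply 1 2]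
  ring

theorem IsSymm.mul_dotProduct_mulVec_fin_three (hA : A.IsSymm) (v : Fin 3 → ℤ) :
    A 0 0 * (v ⬝ᵥ A *ᵥ v) = (A 0 0 * v 0 + A 0 1 * v 1 + A 0 2 * v 2) ^ 2 +
      ![v 1, v 2] ⬝ᵥ scaledSchur A *ᵥ ![v 1, v 2] := by
  simp [scaledSchur, dotProduct, mulVec, Fin.sum_univ_two, Fin.sum_univ_three, hA.apply 0 1,
    hA.apply 0 2, hA.apply 1 2]
  ring

theorem PosDef.posDef_scaledSchur (hA : A.PosDef) : (scaledSchur A).PosDef := by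
  refine .of_dotProduct_mulVec_pos (isHermitian_iff_isSymm.mpr (isSymm_scaledSchur A))
    fun w hw ↦ ?_
  have h₀ : 0 < A 0 0 := hA.diag_pos
  set v : Fin 3 → ℤ := ![-(A 0 1 * w 0 + A 0 2 * w 1), A 0 0 * w 0, A 0 0 * w 1]
  have hv : v ≠ 0 := fun hv ↦ hw <| by
    ext i
    fin_cases i
    · simpa [v, h₀.ne'] using congrFun hv 1
    · simpa [v, h₀.ne'] using congrFun hv 2
  have key := hA.isSymm.mul_dotProduct_mulVec_fin_three v
  have hscale : ![v 1, v 2] ⬝ᵥ scaledSchur A *ᵥ ![v 1, v 2] =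
      A 0 0 ^ 2 * (w ⬝ᵥ scaledSchur A *ᵥ w) := by
    simp [v, dotProduct, mulVec, Fin.sum_univ_two]
    ring
  have hlin : A 0 0 * v 0 + A 0 1 * v 1 + A 0 2 * v 2 = 0 := by
    simp [v]
    ring
  have hq := hA.dotProduct_mulVec_pos hv
  rw [star_trivial, ← mul_pos_iff_of_pos_left h₀, key, hlin, hscale] at hq
  simpa using pos_of_mul_pos_right (by simpa using hq) (sq_nonneg (A 0 0))

theorem IsSymm.posDef_of_posDef_scaledSchur (hA : A.IsSymm) (h₀ : 0 < A 0 0)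
    (hS : (scaledSchur A).PosDef) : A.PosDef := by
  refine .of_dotProduct_mulVec_pos (isHermitian_iff_isSymm.mpr hA) fun v hv ↦ ?_
  have hsum : 0 < (A 0 0 * v 0 + A 0 1 * v 1 + A 0 2 * v 2) ^ 2 +
      ![v 1, v 2] ⬝ᵥ scaledSchur A *ᵥ ![v 1, v 2] := by
    by_cases hw : ![v 1, v 2] = 0
    · have h₁ : v 1 = 0 := by simpa using congrFun hw 0
      have h₂ : v 2 = 0 := by simpa using congrFun hw 1
      have h₀' : v 0 ≠ 0 := fun h₀' ↦ hv <| by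
        ext i
        fin_cases i <;> simp [h₀', h₁, h₂]
      have := mul_ne_zero h₀.ne' h₀'
      simp [h₁, h₂]
      positivity
    · have := hS.dotProduct_mulVec_pos hw
      simp only [star_trivial] at this
      positivity
  rw [← hA.mul_dotProduct_mulVec_fin_three] at hsum
  simpa using pos_of_mul_pos_right hsum h₀.le

theorem PosDef.exists_diag_lt_of_det_eq_one (hA : A.PosDef) (hdet : A.det = 1)
    (hne : A 0 0 ≠ 1) :
    ∃ P : Matrix (Fin 3) (Fin 3) ℤ, P.det = 1 ∧ (Pᵀ * A * P) 0 0 < A 0 0 := by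
  have h₀ : 0 < A 0 0 := hA.diag_pos
  obtain ⟨Q, hQ, hQS⟩ := hA.posDef_scaledSchur.exists_three_mul_sq_le_det_fin_two
  rw [hA.isSymm.det_scaledSchur, hdet, mul_one, transpose_mul_mul_apply_self] at hQS
  obtain ⟨t, ht⟩ := Int.exists_four_mul_sq_add_mul_le (A 0 1 * Q 0 0 + A 0 2 * Q 1 0) h₀
  -- The first column of `P` extends the short vector `Qᵀ 0` of the Schur complement by a first
  -- coordinate `t` that makes the square split off by `mul_dotProduct_mulVec_fin_three` small.
  set P : Matrix (Fin 3) (Fin 3) ℤ := !![t, -1, 0; Q 0 0, 0, Q 0 1; Q 1 0, 0, Q 1 1]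
  refine ⟨P, ?_, ?_⟩
  · rw [det_fin_two] at hQ
    simp [P, det_fin_three]
    linarith
  have key := hA.isSymm.mul_dotProduct_mulVec_fin_three (Pᵀ 0)
  have hcol : ![Pᵀ 0 1, Pᵀ 0 2] = Qᵀ 0 := by
    ext i
    fin_cases i <;> simp [P]
  rw [← transpose_mul_mul_apply_self, hcol] at key
  set a := A 0 0
  set a' := (Pᵀ * A * P) 0 0
  set s := Qᵀ 0 ⬝ᵥ scaledSchur A *ᵥ Qᵀ 0
  have hlin : a * Pᵀ 0 0 + A 0 1 * Pᵀ 0 1 + A 0 2 * Pᵀ 0 2 =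
      A 0 1 * Q 0 0 + A 0 2 * Q 1 0 + a * t := by
    simp [P]
    ring
  rw [hlin] at key
  have ha : 2 ≤ a := by omega
  -- Hermite's bound `3 * s ^ 2 ≤ 4 * a` for the scaled Schur complement, of determinant `a`,
  -- forces `4 * s < 3 * a ^ 2` as `2 ≤ a`; hence `4 * a * a' ≤ a ^ 2 + 4 * s < 4 * a ^ 2`.
  have hs : 4 * s < 3 * a ^ 2 := by
    by_contra! h
    have h₁ : (3 * a ^ 2) ^ 2 ≤ (4 * s) ^ 2 := pow_le_pow_left₀ (by positivity) h 2
    have h₂ : 8 ≤ a ^ 3 := by nlinarith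
    nlinarith
  nlinarith

theorem PosDef.exists_eq_transpose_mul_self_of_diag_eq_one (hA : A.PosDef)
    (hdet : A.det = 1) (h₀ : A 0 0 = 1) : ∃ N : Matrix (Fin 3) (Fin 3) ℤ, A = Nᵀ * N := by
  obtain ⟨M, hM⟩ := hA.posDef_scaledSchur.exists_eq_transpose_mul_self_fin_two
    (by rw [hA.isSymm.det_scaledSchur, hdet, h₀, mul_one])
  have hM' : ∀ i j, scaledSchur A i j = (Mᵀ * M) i j := fun i j ↦ congrFun₂ hM i j
  simp only [Fin.forall_fin_two, scaledSchur, h₀, one_mul, mul_apply, Fin.sum_univ_two,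
    transpose_apply, of_apply, cons_val', cons_val_zero, cons_val_one, cons_val_fin_one] at hM'
  refine ⟨!![1, A 0 1, A 0 2; 0, M 0 0, M 0 1; 0, M 1 0, M 1 1], ?_⟩
  ext i j
  fin_cases i <;> fin_cases j <;>
    simp [mul_apply, Fin.sum_univ_three, h₀, hA.isSymm.apply 0 1, hA.isSymm.apply 0 2,
      hA.isSymm.apply 1 2] <;>
    linarith

theorem PosDef.exists_eq_transpose_mul_self_fin_three (hA : A.PosDef) (hdet : A.det = 1) :
    ∃ N : Matrix (Fin 3) (Fin 3) ℤ, A = Nᵀ * N := by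
  obtain ⟨P, hP, h₀⟩ := hA.exists_det_eq_one_of_descent (fun B ↦ B 0 0 = 1) 0
    (fun B hB hdetB hne ↦ hB.exists_diag_lt_of_det_eq_one hdetB hne) hdet
  obtain ⟨M, hM⟩ :=
    (hA.transpose_mul_mul_of_det_eq_one hP).exists_eq_transpose_mul_self_of_diag_eq_one
      (by rw [det_transpose_mul_mul_of_det_eq_one _ hP, hdet]) h₀
  exact exists_eq_transpose_mul_self_of_transpose_mul_mul hP hM

end Ternary

end Matrix

theorem Nat.exists_prime_mul_eq_add_one_of_mod_four_eq_two {n : ℕ} (hn : n % 4 = 2) :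
    ∃ p D : ℕ, p.Prime ∧ D % 4 = 1 ∧ n * D = p + 1 := by
  obtain ⟨m, rfl⟩ : ∃ m, n = m + 1 := ⟨n - 1, by omega⟩
  have hodd : Odd m := Nat.odd_iff.mpr (by omega)
  have hcop : m.Coprime (4 * (m + 1)) :=
    Nat.Coprime.mul_right (Nat.Coprime.pow_right 2 (hodd.coprime_two_right))
      (Nat.coprime_self_add_right.mpr (Nat.coprime_one_right m))
  obtain ⟨p, hpm, hp, hpmod⟩ := Nat.forall_exists_prime_gt_and_modEq m (by omega) hcop
  have hdiv := Nat.div_add_mod p (4 * (m + 1))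
  rw [hpmod, Nat.mod_eq_of_lt (by omega)] at hdiv
  refine ⟨p, 4 * (p / (4 * (m + 1))) + 1, hp, by omega, ?_⟩
  nlinarith

theorem exists_dvd_sq_add_of_mod_four_eq_one {p D : ℕ} [Fact p.Prime] (hp : p % 4 = 1)
    (hD : D % 4 = 1) (hDp : D ∣ p + 1) (hlt : D < p) : ∃ b : ℤ, (p : ℤ) ∣ b ^ 2 + D := by
  have hleg : legendreSym p (-D) = 1 := by
    have hpD : (p : ℤ) ≡ -1 [ZMOD D] :=
      (Int.modEq_iff_dvd.mpr (by simpa using Int.natCast_dvd_natCast.mpr hDp)).symm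
    rw [neg_eq_neg_one_mul, legendreSym.mul, legendreSym.at_neg_one (by omega),
      ZMod.χ₄_nat_one_mod_four hp, one_mul, jacobiSym.legendreSym.to_jacobiSym,
      jacobiSym.quadratic_reciprocity_one_mod_four hD (Nat.odd_iff.mpr (by omega)),
      jacobiSym.mod_left' hpD, jacobiSym.at_neg_one (Nat.odd_iff.mpr (by omega)),
      ZMod.χ₄_nat_one_mod_four hD]
  have hne : ((-D : ℤ) : ZMod p) ≠ 0 := by
    rw [Int.cast_neg, neg_ne_zero, Int.cast_natCast, Ne, ZMod.natCast_eq_zero_iff]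
    exact fun h ↦ absurd (Nat.le_of_dvd (by omega) h) (by omega)
  obtain ⟨s, hs⟩ := (legendreSym.eq_one_iff p hne).mp hleg
  refine ⟨s.valMinAbs, (ZMod.intCast_zmod_eq_zero_iff_dvd _ p).mp ?_⟩
  push_cast at hs ⊢
  linear_combination -hs

open Matrix in
theorem Nat.exists_sq_add_sq_add_sq_of_mod_four_eq_two {n : ℕ} (hn : n % 4 = 2) :
    ∃ x y z : ℕ, n = x ^ 2 + y ^ 2 + z ^ 2 := by
  obtain ⟨p, D, hp, hD, hnD⟩ := Nat.exists_prime_mul_eq_add_one_of_mod_four_eq_two hn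
  have : Fact p.Prime := ⟨hp⟩
  obtain ⟨b, a, hab⟩ := exists_dvd_sq_add_of_mod_four_eq_one (p := p) (D := D)
    (by have := Nat.mod_mul_mod n D 4; simp only [hn, hnD] at this; omega)
    hD (Dvd.intro_left n hnD) (by nlinarith [hp.two_le, (by omega : 2 ≤ n)])
  have hnDZ : (n : ℤ) * D = p + 1 := by exact_mod_cast hnD
  set A : Matrix (Fin 3) (Fin 3) ℤ := !![a, b, 1; b, p, 0; 1, 0, n]
  have hsymm : A.IsSymm := IsSymm.ext fun i j ↦ by fin_cases i <;> fin_cases j <;> rfl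
  have hdet : A.det = 1 := by
    simp [A, det_fin_three]
    linear_combination (-n : ℤ) * hab + hnDZ
  have ha : 0 < a := by
    have hp₀ : (0 : ℤ) < p := by exact_mod_cast hp.pos
    have hD₁ : (1 : ℤ) ≤ D := by exact_mod_cast (by omega : 1 ≤ D)
    nlinarith
  have hA : A.PosDef := by
    refine hsymm.posDef_of_posDef_scaledSchur ha ((isSymm_scaledSchur A).posDef_fin_two ?_ ?_)
    · simp [A, scaledSchur]
      nlinarith
    · rw [hsymm.det_scaledSchur, hdet]
      simpa [A] using ha
  obtain ⟨N, hN⟩ := hA.exists_eq_transpose_mul_self_fin_three hdet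
  refine ⟨(N 0 2).natAbs, (N 1 2).natAbs, (N 2 2).natAbs, ?_⟩
  zify
  simpa [A, mul_apply, Fin.sum_univ_three, sq] using congrFun₂ hN 2 2

theorem eight_mul_T_add_one (m : ℕ) : 8 * T m + 1 = (2 * m + 1) ^ 2 := by
  have h : 2 * T m = m * (m + 1) := Nat.mul_div_cancel' (Nat.even_mul_succ_self m).two_dvd
  linear_combination 4 * h

theorem Nat.sq_mod_four_eq_mod_two (k : ℕ) : k ^ 2 % 4 = k % 2 := by
  rcases Nat.even_or_odd' k with ⟨j, rfl | rfl⟩ <;> ring_nf <;> omega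

theorem exists_eq_odd_sq_add_odd_sq_add_four_mul_odd_sq_of_even {m x y z : ℕ} (hm : m % 8 = 6)
    (hx : Odd x) (hy : Odd y) (hz : Even z) (h : m = x ^ 2 + y ^ 2 + z ^ 2) :
    ∃ a b c : ℕ, m = (2 * a + 1) ^ 2 + (2 * b + 1) ^ 2 + 4 * (2 * c + 1) ^ 2 := by
  obtain ⟨a, rfl⟩ := hx
  obtain ⟨b, rfl⟩ := hy
  obtain ⟨w, rfl⟩ := hz
  obtain ⟨c, rfl⟩ : Odd w := by
    have hw : (w + w) ^ 2 = 4 * w ^ 2 := by ring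
    have := Nat.sq_mod_four_eq_mod_two w
    rw [← eight_mul_T_add_one a, ← eight_mul_T_add_one b, hw] at h
    exact Nat.odd_iff.mpr (by omega)
  exact ⟨a, b, c, by rw [h]; ring⟩

theorem exists_eq_odd_sq_add_odd_sq_add_four_mul_odd_sq {m x y z : ℕ} (hm : m % 8 = 6)
    (h : m = x ^ 2 + y ^ 2 + z ^ 2) :
    ∃ a b c : ℕ, m = (2 * a + 1) ^ 2 + (2 * b + 1) ^ 2 + 4 * (2 * c + 1) ^ 2 := by
  have := Nat.sq_mod_four_eq_mod_two x
  have := Nat.sq_mod_four_eq_mod_two y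
  have := Nat.sq_mod_four_eq_mod_two z
  rcases Nat.even_or_odd z with hz | hz
  · rw [Nat.even_iff] at hz
    exact exists_eq_odd_sq_add_odd_sq_add_four_mul_odd_sq_of_even hm
      (Nat.odd_iff.mpr (by omega)) (Nat.odd_iff.mpr (by omega)) (Nat.even_iff.mpr hz) h
  rcases Nat.even_or_odd y with hy | hy
  · rw [Nat.even_iff] at hy
    exact exists_eq_odd_sq_add_odd_sq_add_four_mul_odd_sq_of_even (x := x) (y := z) hm
      (Nat.odd_iff.mpr (by omega)) hz (Nat.even_iff.mpr hy) (by rw [h]; ring)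
  · rw [Nat.odd_iff] at hy hz
    exact exists_eq_odd_sq_add_odd_sq_add_four_mul_odd_sq_of_even hm
      (Nat.odd_iff.mpr hy) (Nat.odd_iff.mpr hz) (Nat.even_iff.mpr (by omega : x % 2 = 0))
      (by rw [h]; ring)

theorem liouville_1_1_4 (n : ℕ) : ∃ x y z : ℕ, n = T x + T y + 4 * T z := by
  obtain ⟨x, y, z, h⟩ :=
    Nat.exists_sq_add_sq_add_sq_of_mod_four_eq_two (n := 8 * n + 6) (by omega)
  obtain ⟨a, b, c, h'⟩ := exists_eq_odd_sq_add_odd_sq_add_four_mul_odd_sq (by omega) h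
  rw [← eight_mul_T_add_one a, ← eight_mul_T_add_one b, ← eight_mul_T_add_one c] at h'
  exact ⟨a, b, c, by omega⟩
end
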